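/- arXiv:1803.00182 — 9 statements merged into one kernel-verified Lean document; each statement's English description precedes it below -/
import Mathlib

section
/- Define F(b, δ, z) := 1 + ∫₁^∞ (1 - (1 + z·s^{-1/δ})^{-b}) ds for b ≥ 0, 0 < δ < 1, z ≥ 0. Then as z → 0⁺, F(b, δ, z) = 1 + b·z·δ/(1-δ) + o(z). Equivalently, lim_{z→0⁺} (F(b,δ,z) - 1)/z = b·δ/(1-δ). -/
open MeasureTheory Set Filter

lemma key_bound {b x : ℝ} (hb : 0 ≤ b) (hx : 0 ≤ x) :
    1 - (1 + x) ^ (-b) ≤ b * x := by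
  have h1 : (0:ℝ) < 1 + x := by linarith
  have h2 : (0:ℝ) < (1 + x) ^ (-b) := Real.rpow_pos_of_pos h1 _
  have h3 : Real.log ((1 + x) ^ (-b)) ≤ (1 + x) ^ (-b) - 1 :=
    Real.log_le_sub_one_of_pos h2
  rw [Real.log_rpow h1] at h3
  have h4 : Real.log (1 + x) ≤ x := by
    have := Real.log_le_sub_one_of_pos h1
    linarith
  nlinarith [mul_le_mul_of_nonneg_left h4 hb]

lemma key_nonneg {b x : ℝ} (hb : 0 ≤ b) (hx : 0 ≤ x) :
    0 ≤ 1 - (1 + x) ^ (-b) := by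
  have : (1 + x) ^ (-b) ≤ 1 :=
    Real.rpow_le_one_of_one_le_of_nonpos (by linarith) (by linarith)
  linarith

lemma key_lim {b a : ℝ} (ha : 0 ≤ a) :
    Tendsto (fun z : ℝ => (1 - (1 + z * a) ^ (-b)) / z) (nhdsWithin 0 (Ioi 0))
      (nhds (b * a)) := by
  have h1 : HasDerivAt (fun z : ℝ => 1 + z * a) a 0 := by
    simpa using ((hasDerivAt_id (0:ℝ)).mul_const a).const_add 1
  have h3 : HasDerivAt (fun z : ℝ => (1 + z * a) ^ (-b)) (-b * (1:ℝ) ^ (-b - 1) * a) 0 := by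
    have := h1.rpow_const (p := -b) (by norm_num)
    simpa [mul_comm] using this
  have h4 : HasDerivAt (fun z : ℝ => 1 - (1 + z * a) ^ (-b)) (b * a) 0 := by
    have := h3.const_sub 1
    simpa [Real.one_rpow] using this
  have h5 := hasDerivAt_iff_tendsto_slope.mp h4
  have h6 : Tendsto (slope (fun z : ℝ => 1 - (1 + z * a) ^ (-b)) 0)
      (nhdsWithin 0 (Ioi 0)) (nhds (b * a)) :=
    h5.mono_left (nhdsWithin_mono _ (fun x hx => ne_of_gt hx))
  refine h6.congr' ?_
  filter_upwards [self_mem_nhdsWithin] with z hz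
  simp [slope_def_field, div_eq_mul_inv]

theorem stmt2 (b δ : ℝ) (hb : 0 ≤ b) (hδ : 0 < δ) (hδ1 : δ < 1) :
    Tendsto (fun z : ℝ =>
        ((1 + ∫ s in Ioi (1 : ℝ), (1 - (1 + z * s ^ (-1 / δ)) ^ (-b))) - 1) / z)
      (nhdsWithin 0 (Ioi 0)) (nhds (b * δ / (1 - δ))) := by
  have hexp : (-1 / δ) < -1 := by
    rw [div_lt_iff₀ hδ]; nlinarith
  have hpow_nonneg : ∀ s : ℝ, s ∈ Ioi (1:ℝ) → 0 ≤ s ^ (-1/δ) := fun s hs =>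
    Real.rpow_nonneg (by linarith [mem_Ioi.mp hs]) _
  -- integrability of bound
  have hint : IntegrableOn (fun s : ℝ => s ^ (-1/δ)) (Ioi 1) :=
    integrableOn_Ioi_rpow_of_lt hexp one_pos
  have hbound_int : IntegrableOn (fun s : ℝ => b * s ^ (-1/δ)) (Ioi 1) := hint.const_mul b
  -- dominated convergence
  have hDCT : Tendsto (fun z : ℝ => ∫ s in Ioi (1:ℝ), (1 - (1 + z * s ^ (-1 / δ)) ^ (-b)) / z)
      (nhdsWithin 0 (Ioi 0)) (nhds (∫ s in Ioi (1:ℝ), b * s ^ (-1/δ))) := by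
    apply tendsto_integral_filter_of_dominated_convergence (fun s => b * s ^ (-1/δ))
    · filter_upwards [self_mem_nhdsWithin] with z hz
      apply ContinuousOn.aestronglyMeasurable _ measurableSet_Ioi
      intro s hs
      have hs1 : (1:ℝ) < s := hs
      have hpos : 0 < 1 + z * s ^ (-1/δ) := by
        have := Real.rpow_nonneg (le_of_lt (lt_trans one_pos hs1)) (-1/δ)
        nlinarith [mem_Ioi.mp hz]
      have hc0 : ContinuousWithinAt (fun x : ℝ => 1 + z * x ^ (-1/δ)) (Ioi 1) s :=
        continuousWithinAt_const.add (continuousWithinAt_const.mul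
          ((Real.continuousAt_rpow_const s _ (Or.inl (by positivity))).continuousWithinAt))
      exact (continuousWithinAt_const.sub
        (hc0.rpow_const (Or.inl hpos.ne'))).div_const _
    · filter_upwards [self_mem_nhdsWithin] with z hz
      rw [ae_restrict_iff' measurableSet_Ioi]
      filter_upwards with s hs
      have hz0 : (0:ℝ) < z := hz
      have ha : 0 ≤ s ^ (-1/δ) := hpow_nonneg s hs
      have hx : 0 ≤ z * s ^ (-1/δ) := mul_nonneg hz0.le ha
      rw [Real.norm_eq_abs, abs_div, abs_of_nonneg (key_nonneg hb hx), abs_of_pos hz0,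
        div_le_iff₀ hz0]
      calc 1 - (1 + z * s ^ (-1/δ)) ^ (-b) ≤ b * (z * s ^ (-1/δ)) := key_bound hb hx
        _ = b * s ^ (-1/δ) * z := by ring
    · exact hbound_int
    · rw [ae_restrict_iff' measurableSet_Ioi]
      filter_upwards with s hs
      exact key_lim (hpow_nonneg s hs)
  -- compute the limit integral
  have hval : (∫ s in Ioi (1:ℝ), b * s ^ (-1/δ)) = b * δ / (1 - δ) := by
    rw [integral_const_mul, integral_Ioi_rpow_of_lt hexp one_pos]
    rw [Real.one_rpow]
    have hne : (1:ℝ) - δ ≠ 0 := by linarith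
    have hne2 : (-1:ℝ) + δ ≠ 0 := by intro h; apply hne; linarith
    field_simp
    ring
  rw [← hval]
  refine hDCT.congr' ?_
  filter_upwards [self_mem_nhdsWithin] with z hz
  rw [integral_div]
  ring_nf
end

section
/- Define F(b, δ, z) := 1 + ∫₁^∞ (1 - (1 + z·s^{-1/δ})^{-b}) ds and T(b, δ) := ∫₀^∞ (1 - (1 + r^{-1/δ})^{-b}) dr, for b > 0 and 0 < δ < 1. Then F(b, δ, z) ~ z^δ · T(b, δ) as z → ∞, i.e., lim_{z→∞} F(b,δ,z)/z^δ = T(b,δ). -/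
open MeasureTheory Set Filter Topology

/-!
The substitution `r = s z^(-δ)` turns `F(b, δ, z) / z^δ` into
`z^(-δ) + ∫_{z^(-δ)}^∞ (1 - (1 + r^(-1/δ))^(-b)) dr`, which tends to `T(b, δ)` as `z → ∞`
because the integrand is integrable on `(0, ∞)`: it lies in `[0, 1]`, and it is at most
`b r^(-1/δ)` since `(1 + x)^(-b) ≥ exp (-b x) ≥ 1 - b x`.
-/

theorem one_sub_one_add_rpow_neg_mem_Icc {b x : ℝ} (hb : 0 ≤ b) (hx : 0 ≤ x) :
    1 - (1 + x) ^ (-b) ∈ Icc 0 1 := by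
  have hx1 : 1 ≤ 1 + x := by linarith
  constructor
  · linarith [Real.rpow_le_one_of_one_le_of_nonpos hx1 (neg_nonpos.2 hb)]
  · linarith [Real.rpow_nonneg (zero_le_one.trans hx1) (-b)]

theorem one_sub_one_add_rpow_neg_le_mul {b x : ℝ} (hb : 0 ≤ b) (hx : -1 < x) :
    1 - (1 + x) ^ (-b) ≤ b * x := by
  have hx1 : 0 < 1 + x := by linarith
  have hpow : (1 + x) ^ b ≤ Real.exp (b * x) := by
    calc (1 + x) ^ b ≤ Real.exp x ^ b := by
          gcongr; linarith [Real.add_one_le_exp x]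
      _ = Real.exp (b * x) := by rw [← Real.exp_mul, mul_comm]
  have hexp : Real.exp (-(b * x)) ≤ (1 + x) ^ (-b) := by
    rw [Real.rpow_neg hx1.le, Real.exp_neg]
    exact inv_anti₀ (by positivity) hpow
  linarith [Real.add_one_le_exp (-(b * x))]

theorem integrableOn_Ioi_one_sub_one_add_rpow_neg {b p : ℝ} (hb : 0 ≤ b) (hp : p < -1) :
    IntegrableOn (fun r : ℝ => 1 - (1 + r ^ p) ^ (-b)) (Ioi 0) := by
  have hmeas : Measurable (fun r : ℝ => 1 - (1 + r ^ p) ^ (-b)) := by fun_prop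
  have hIcc : ∀ r ∈ Ioi (0 : ℝ), 1 - (1 + r ^ p) ^ (-b) ∈ Icc 0 1 := fun r hr =>
    one_sub_one_add_rpow_neg_mem_Icc hb (Real.rpow_nonneg (le_of_lt hr) p)
  rw [← Ioc_union_Ioi_eq_Ioi zero_le_one]
  refine IntegrableOn.union ?_ ?_
  · refine Measure.integrableOn_of_bounded (M := 1) measure_Ioc_lt_top.ne
      hmeas.aestronglyMeasurable ?_
    filter_upwards [ae_restrict_mem measurableSet_Ioc] with r hr
    rw [Real.norm_of_nonneg (hIcc r hr.1).1]
    exact (hIcc r hr.1).2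
  · refine ((integrableOn_Ioi_rpow_of_lt hp one_pos).const_mul b).mono'
      hmeas.aestronglyMeasurable ?_
    filter_upwards [ae_restrict_mem measurableSet_Ioi] with r (hr : 1 < r)
    have hr0 : 0 < r := one_pos.trans hr
    rw [Real.norm_of_nonneg (hIcc r hr0).1]
    exact one_sub_one_add_rpow_neg_le_mul hb (by linarith [Real.rpow_nonneg hr0.le p])

theorem integral_Ioi_one_comp_mul_rpow_neg_inv {E : Type*} [NormedAddCommGroup E]
    [NormedSpace ℝ E] (g : ℝ → E) {z δ : ℝ} (hz : 0 < z) (hδ : δ ≠ 0) :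
    ∫ s in Ioi 1, g (z * s ^ (-1 / δ)) = z ^ δ • ∫ r in Ioi (z ^ (-δ)), g (r ^ (-1 / δ)) := by
  have hzδ : 0 < z ^ (-δ) := Real.rpow_pos_of_pos hz _
  have hscale : ∀ s ∈ Ioi (1 : ℝ), z * s ^ (-1 / δ) = (s * z ^ (-δ)) ^ (-1 / δ) := by
    intro s hs
    have hexp : -δ * (-1 / δ) = 1 := by field_simp
    rw [Real.mul_rpow (zero_le_one.trans (le_of_lt hs)) hzδ.le, ← Real.rpow_mul hz.le, hexp,
      Real.rpow_one, mul_comm]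
  rw [setIntegral_congr_fun measurableSet_Ioi (fun s hs => congrArg g (hscale s hs)),
    integral_comp_mul_right_Ioi (fun r => g (r ^ (-1 / δ))) 1 hzδ, one_mul,
    Real.rpow_neg hz.le, inv_inv]

theorem tendsto_setIntegral_Ioi_nhdsGT {E : Type*} [NormedAddCommGroup E] [NormedSpace ℝ E]
    {μ : Measure ℝ} {f : ℝ → E} {a : ℝ} (hf : IntegrableOn f (Ioi a) μ) :
    Tendsto (fun ε => ∫ x in Ioi ε, f x ∂μ) (𝓝[>] a) (𝓝 (∫ x in Ioi a, f x ∂μ)) := by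
  have hcover : AECover (μ.restrict (Ioi a)) (𝓝[>] a) Ioi :=
    aecover_Ioi_of_Ioi (tendsto_id.mono_left nhdsWithin_le_nhds)
  refine (hcover.integral_tendsto_of_countably_generated hf).congr' ?_
  filter_upwards [self_mem_nhdsWithin] with ε hε
  rw [Measure.restrict_restrict measurableSet_Ioi, Ioi_inter_Ioi, max_eq_left (le_of_lt hε)]

theorem stmt3 (b δ : ℝ) (hb : 0 < b) (hδ : 0 < δ) (hδ1 : δ < 1) :
    Tendsto (fun z : ℝ =>
        (1 + ∫ s in Ioi (1 : ℝ), (1 - (1 + z * s ^ (-1 / δ)) ^ (-b))) / z ^ δ)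
      atTop (nhds (∫ r in Ioi (0 : ℝ), (1 - (1 + r ^ (-1 / δ)) ^ (-b)))) := by
  have hp : -1 / δ < -1 := by rw [div_lt_iff₀ hδ]; linarith
  have hint := integrableOn_Ioi_one_sub_one_add_rpow_neg hb.le hp
  have hε : Tendsto (fun z : ℝ => z ^ (-δ)) atTop (𝓝[>] 0) :=
    tendsto_nhdsWithin_iff.2 ⟨tendsto_rpow_neg_atTop hδ,
      (eventually_gt_atTop 0).mono fun z hz => Real.rpow_pos_of_pos hz _⟩
  have hlim := (tendsto_rpow_neg_atTop hδ).add ((tendsto_setIntegral_Ioi_nhdsGT hint).comp hε)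
  rw [zero_add] at hlim
  refine hlim.congr' ?_
  filter_upwards [eventually_gt_atTop 0] with z hz
  rw [integral_Ioi_one_comp_mul_rpow_neg_inv (fun x => 1 - (1 + x) ^ (-b)) hz hδ.ne',
    smul_eq_mul, Function.comp_apply, Real.rpow_neg hz.le]
  field_simp
end

section
/- For 0 < δ < 1, the integral T(2, δ) := ∫₀^∞ (1 - (1 + r^{-1/δ})^{-2}) dr equals (1+δ)·πδ/sin(πδ). -/
/-!
Substituting `r = t ^ δ` turns the integrand into `δ t^(δ-1) (1/(1+t) + t/(1+t)^2)`, and the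
substitution `t = x / (1 - x)` identifies `∫₀^∞ t^(a-1) / (1+t)^(a+b) dt` with the Euler beta
integral `B(a, b)`. Hence the integral is `δ (B(δ, 1-δ) + B(1+δ, 1-δ)) = δ (1 + δ) Γ(δ) Γ(1-δ)`,
and Euler's reflection formula finishes.
-/

open MeasureTheory Set Real

theorem integral_Ioo_rpow_mul_one_sub_rpow {a b : ℝ} (ha : 0 < a) (hb : 0 < b) :
    ∫ x in Ioo (0 : ℝ) 1, x ^ (a - 1) * (1 - x) ^ (b - 1) = Gamma a * Gamma b / Gamma (a + b) := by
  have hcast :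
      Complex.betaIntegral a b = ↑(∫ x in Ioo (0 : ℝ) 1, x ^ (a - 1) * (1 - x) ^ (b - 1)) := by
    rw [Complex.betaIntegral, intervalIntegral.integral_of_le zero_le_one,
      integral_Ioc_eq_integral_Ioo]
    refine (setIntegral_congr_fun measurableSet_Ioo fun x hx => ?_).trans integral_complex_ofReal
    push_cast [Complex.ofReal_cpow hx.1.le, Complex.ofReal_cpow (sub_nonneg.2 hx.2.le)]
    rfl
  have h := Complex.betaIntegral_eq_Gamma_mul_div a b (by simpa) (by simpa)
  rw [hcast, ← Complex.ofReal_add, Complex.Gamma_ofReal, Complex.Gamma_ofReal,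
    Complex.Gamma_ofReal] at h
  exact_mod_cast h

theorem integral_Ioi_eq_integral_Ioo_div_one_sub {E : Type*} [NormedAddCommGroup E]
    [NormedSpace ℝ E] (g : ℝ → E) :
    ∫ t in Ioi (0 : ℝ), g t = ∫ x in Ioo (0 : ℝ) 1, ((1 - x) ^ 2)⁻¹ • g (x / (1 - x)) := by
  have himage : (fun x : ℝ => x / (1 - x)) '' Ioo 0 1 = Ioi 0 := by
    refine Subset.antisymm ?_ fun t (ht : 0 < t) => ⟨t / (1 + t), ?_, ?_⟩
    · rintro _ ⟨x, hx, rfl⟩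
      exact div_pos hx.1 (sub_pos.2 hx.2)
    · exact ⟨by positivity, (div_lt_one (by positivity)).2 (by linarith)⟩
    · field_simp
      ring
  have hderiv : ∀ x ∈ Ioo (0 : ℝ) 1,
      HasDerivWithinAt (fun x : ℝ => x / (1 - x)) ((1 - x) ^ 2)⁻¹ (Ioo 0 1) x := by
    intro x hx
    have h : HasDerivAt (fun y : ℝ => y / (1 - y)) ((1 * (1 - x) - x * -1) / (1 - x) ^ 2) x :=
      (hasDerivAt_id' x).div ((hasDerivAt_id' x).const_sub 1) (sub_pos.2 hx.2).ne'
    rw [show (1 * (1 - x) - x * -1) / (1 - x) ^ 2 = ((1 - x) ^ 2)⁻¹ by ring] at h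
    exact h.hasDerivWithinAt
  have hinj : InjOn (fun x : ℝ => x / (1 - x)) (Ioo 0 1) := by
    intro x hx y hy hxy
    rw [div_eq_div_iff (sub_pos.2 hx.2).ne' (sub_pos.2 hy.2).ne'] at hxy
    linarith
  rw [← himage, integral_image_eq_integral_abs_deriv_smul measurableSet_Ioo hderiv hinj]
  refine setIntegral_congr_fun measurableSet_Ioo fun x _ => ?_
  rw [abs_of_nonneg (by positivity)]

theorem integral_Ioi_rpow_div_one_add_rpow {a b : ℝ} (ha : 0 < a) (hb : 0 < b) :
    ∫ t in Ioi (0 : ℝ), t ^ (a - 1) / (1 + t) ^ (a + b) = Gamma a * Gamma b / Gamma (a + b) := by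
  rw [integral_Ioi_eq_integral_Ioo_div_one_sub, ← integral_Ioo_rpow_mul_one_sub_rpow ha hb]
  refine setIntegral_congr_fun measurableSet_Ioo fun x hx => ?_
  have hy : 0 < 1 - x := sub_pos.2 hx.2
  rw [show 1 + x / (1 - x) = (1 - x)⁻¹ by field_simp; ring, inv_rpow hy.le,
    div_rpow hx.1.le hy.le, show b - 1 = (a + b) - ((a - 1) + 2) by ring,
    rpow_sub hy (a + b), rpow_add hy (a - 1), rpow_two, smul_eq_mul]
  field_simp

theorem one_sub_one_add_rpow_neg_inv_rpow_neg_two {δ t : ℝ} (hδ : δ ≠ 0) (ht : 0 < t) :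
    1 - (1 + (t ^ δ) ^ (-1 / δ)) ^ (-2 : ℝ) = 1 / (1 + t) + t / (1 + t) ^ 2 := by
  rw [← rpow_mul ht.le, mul_div_cancel₀ _ hδ, rpow_neg_one, rpow_neg (by positivity), rpow_two]
  field_simp
  ring

theorem stmt5 (δ : ℝ) (hδ : 0 < δ) (hδ1 : δ < 1) :
    (∫ r in Ioi (0 : ℝ), (1 - (1 + r ^ (-1 / δ)) ^ (-(2 : ℝ))))
      = (1 + δ) * Real.pi * δ / Real.sin (Real.pi * δ) := by
  have hB₁ : ∫ t in Ioi (0 : ℝ), t ^ (δ - 1) / (1 + t) = Gamma δ * Gamma (1 - δ) := by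
    simpa using integral_Ioi_rpow_div_one_add_rpow hδ (sub_pos.2 hδ1)
  have hB₂ : ∫ t in Ioi (0 : ℝ), t ^ δ / (1 + t) ^ 2 = δ * Gamma δ * Gamma (1 - δ) := by
    have h := integral_Ioi_rpow_div_one_add_rpow (a := 1 + δ) (by linarith) (sub_pos.2 hδ1)
    rw [add_sub_cancel_left, show 1 + δ + (1 - δ) = 2 by ring, Gamma_two, div_one, add_comm,
      Gamma_add_one hδ.ne'] at h
    simpa only [rpow_two] using h
  have hIntegrable {f : ℝ → ℝ} {c : ℝ} (hf : ∫ t in Ioi (0 : ℝ), f t = c) (hc : 0 < c) :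
      IntegrableOn f (Ioi 0) :=
    .of_integral_ne_zero (hf ▸ hc.ne')
  calc ∫ r in Ioi (0 : ℝ), 1 - (1 + r ^ (-1 / δ)) ^ (-(2 : ℝ))
      = ∫ t in Ioi (0 : ℝ), (δ * t ^ (δ - 1)) • (1 - (1 + (t ^ δ) ^ (-1 / δ)) ^ (-(2 : ℝ))) :=
        (integral_comp_rpow_Ioi_of_pos hδ).symm
    _ = ∫ t in Ioi (0 : ℝ), δ * (t ^ (δ - 1) / (1 + t) + t ^ δ / (1 + t) ^ 2) := by
        refine setIntegral_congr_fun measurableSet_Ioi fun t (ht : 0 < t) => ?_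
        rw [smul_eq_mul, one_sub_one_add_rpow_neg_inv_rpow_neg_two hδ.ne' ht, rpow_sub_one ht.ne']
        field_simp
    _ = δ * (Gamma δ * Gamma (1 - δ) + δ * Gamma δ * Gamma (1 - δ)) := by
        rw [integral_const_mul, integral_add, hB₁, hB₂]
        · exact hIntegrable hB₁ (by positivity)
        · exact hIntegrable hB₂ (by positivity)
    _ = (1 + δ) * π * δ / sin (π * δ) := by
        rw [mul_assoc δ, Gamma_mul_Gamma_one_sub]
        ring
end

section
/- For 0 < δ < 1 and z > 0, ₂F₁(1, 1-δ; 2-δ; -z) < (1+z)^{-1}·(1 + z/(2-δ)), where ₂F₁(1,1-δ;2-δ;-z) := (1-δ)·∫₀¹ t^{-δ}/(1+zt) dt. -/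
/-!
Since `t ↦ (1 + z t)⁻¹` is strictly convex, on `(0, 1)` it lies strictly below its chord
`1 - z t / (1 + z)`. Integrating the chord against the weight `t ^ (-δ)` gives
`(1 - δ)⁻¹ - z / ((1 + z) (2 - δ))`, and multiplying by `1 - δ` yields the bound.
-/

open MeasureTheory Set

theorem setIntegral_lt_setIntegral_of_forall_lt {X : Type*} [MeasurableSpace X] {μ : Measure X}
    {s : Set X} {f g : X → ℝ} (hs : MeasurableSet s) (hμs : μ s ≠ 0)
    (hf : IntegrableOn f s μ) (hg : IntegrableOn g s μ) (hlt : ∀ x ∈ s, f x < g x) :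
    ∫ x in s, f x ∂μ < ∫ x in s, g x ∂μ := by
  have hsupp : Function.support (fun x => g x - f x) ∩ s = s :=
    inter_eq_right.mpr fun x hx => (sub_pos.mpr (hlt x hx)).ne'
  rw [← sub_pos, ← integral_sub hg hf,
    setIntegral_pos_iff_support_of_nonneg_ae (f := fun x => g x - f x) _ (hg.sub hf)]
  · exact pos_iff_ne_zero.mpr (by rwa [hsupp])
  · filter_upwards [ae_restrict_mem hs] with x hx
    exact (sub_pos.mpr (hlt x hx)).le

theorem integrableOn_rpow_Ioo_zero_one {r : ℝ} (hr : -1 < r) :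
    IntegrableOn (fun t : ℝ => t ^ r) (Ioo 0 1) :=
  (intervalIntegral.integrableOn_Ioo_rpow_iff zero_lt_one).mpr hr

theorem integral_rpow_Ioo_zero_one {r : ℝ} (hr : -1 < r) :
    ∫ t in Ioo (0 : ℝ) 1, t ^ r = (r + 1)⁻¹ := by
  rw [← integral_Ioc_eq_integral_Ioo, ← intervalIntegral.integral_of_le zero_le_one,
    integral_rpow (Or.inl hr), Real.one_rpow, Real.zero_rpow (by linarith), sub_zero, one_div]

theorem inv_one_add_mul_lt_chord {z t : ℝ} (hz : 0 < z) (ht0 : 0 < t) (ht1 : t < 1) :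
    (1 + z * t)⁻¹ < 1 - z / (1 + z) * t := by
  have hzt : 0 < 1 + z * t := by positivity
  have hchord : 1 - z / (1 + z) * t = (1 + z - z * t) / (1 + z) := by field_simp
  rw [inv_lt_iff_one_lt_mul₀' hzt, hchord, mul_div_assoc', one_lt_div (by positivity)]
  nlinarith [mul_pos (mul_pos (mul_pos hz hz) ht0) (sub_pos.mpr ht1)]

theorem integrableOn_rpow_div_one_add_mul {r z : ℝ} (hr : -1 < r) (hz : 0 ≤ z) :
    IntegrableOn (fun t : ℝ => t ^ r / (1 + z * t)) (Ioo 0 1) := by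
  refine (integrableOn_rpow_Ioo_zero_one hr).mono'
    (Measurable.aestronglyMeasurable (by fun_prop)) ?_
  filter_upwards [ae_restrict_mem measurableSet_Ioo] with t ht
  have hpow : 0 ≤ t ^ r := (Real.rpow_pos_of_pos ht.1 r).le
  have hden : 1 ≤ 1 + z * t := le_add_of_nonneg_right (mul_nonneg hz ht.1.le)
  rw [Real.norm_of_nonneg (div_nonneg hpow (zero_le_one.trans hden))]
  exact div_le_self hpow hden

theorem integral_rpow_div_one_add_mul_lt {r z : ℝ} (hr : -1 < r) (hz : 0 < z) :
    ∫ t in Ioo (0 : ℝ) 1, t ^ r / (1 + z * t) < (r + 1)⁻¹ - z / (1 + z) * (r + 2)⁻¹ := by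
  have hr1 : -1 < r + 1 := by linarith
  have hchord : IntegrableOn (fun t : ℝ => t ^ r - z / (1 + z) * t ^ (r + 1)) (Ioo 0 1) :=
    (integrableOn_rpow_Ioo_zero_one hr).sub ((integrableOn_rpow_Ioo_zero_one hr1).const_mul _)
  calc ∫ t in Ioo (0 : ℝ) 1, t ^ r / (1 + z * t)
      < ∫ t in Ioo (0 : ℝ) 1, (t ^ r - z / (1 + z) * t ^ (r + 1)) := by
        refine setIntegral_lt_setIntegral_of_forall_lt measurableSet_Ioo (by simp)
          (integrableOn_rpow_div_one_add_mul hr hz.le) hchord fun t ⟨ht0, ht1⟩ => ?_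
        rw [Real.rpow_add_one ht0.ne', div_eq_mul_inv, mul_left_comm, ← mul_one_sub]
        exact mul_lt_mul_of_pos_left (by linarith [inv_one_add_mul_lt_chord hz ht0 ht1])
          (Real.rpow_pos_of_pos ht0 r)
    _ = (r + 1)⁻¹ - z / (1 + z) * (r + 2)⁻¹ := by
        rw [integral_sub (integrableOn_rpow_Ioo_zero_one hr)
            ((integrableOn_rpow_Ioo_zero_one hr1).const_mul _), integral_const_mul,
          integral_rpow_Ioo_zero_one hr, integral_rpow_Ioo_zero_one hr1]
        ring_nf

theorem stmt8_general (δ z : ℝ) (hδ1 : δ < 1) (hz : 0 < z) :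
    (1 - δ) * (∫ t in Ioo (0 : ℝ) 1, t ^ (-δ) / (1 + z * t))
      < (1 + z)⁻¹ * (1 + z / (2 - δ)) := by
  have h1δ : 0 < 1 - δ := by linarith
  have h2δ : 0 < 2 - δ := by linarith
  calc (1 - δ) * (∫ t in Ioo (0 : ℝ) 1, t ^ (-δ) / (1 + z * t))
      < (1 - δ) * ((-δ + 1)⁻¹ - z / (1 + z) * (-δ + 2)⁻¹) := by
        gcongr
        exact integral_rpow_div_one_add_mul_lt (by linarith) hz
    _ = (1 + z)⁻¹ * (1 + z / (2 - δ)) := by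
        rw [neg_add_eq_sub, neg_add_eq_sub]
        field_simp
        ring

theorem stmt8 (δ z : ℝ) (hδ : 0 < δ) (hδ1 : δ < 1) (hz : 0 < z) :
    (1 - δ) * (∫ t in Ioo (0 : ℝ) 1, t ^ (-δ) / (1 + z * t))
      < (1 + z)⁻¹ * (1 + z / (2 - δ)) :=
  stmt8_general δ z hδ1 hz
end

section
/- Let K ≥ 1 and let R₁, …, R_K be independent nonnegative random variables with P(R_j > r) = exp(-λ_j π r²) for r ≥ 0, where λ_j > 0. Let P_j, B_j > 0 and α > 2. Then for each i, the probability that P_i B_i R_i^{-α} > P_j B_j R_j^{-α} for all j ≠ i equals 1 / Σ_{j=1}^K (λ_j/λ_i)·((P_j B_j)/(P_i B_i))^{2/α}. -/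
/-!
The squared distances `S j = R j ^ 2` are independent exponential variables with rates
`lam j * π`, and with `w j = (P j B j / P i B i) ^ (2 / α)` tier `i` wins exactly when
`w j * S i < S j` for every `j ≠ i`. Conditioning on `S i = x`, this has probability
`exp (-b x)` with `b = ∑_{j ≠ i} lam j π w j`, and the Laplace transform of an exponential
variable of rate `a` at `b` is `a / (a + b)`.
-/

open MeasureTheory Set

section

open ProbabilityTheory Real

lemma mul_rpow_neg_lt_mul_rpow_neg_iff {p q x y α : ℝ} (hp : 0 < p) (hq : 0 ≤ q) (hx : 0 < x)
    (hy : 0 < y) (hα : 0 < α) :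
    q * y ^ (-α) < p * x ^ (-α) ↔ (q / p) ^ (2 / α) * x ^ 2 < y ^ 2 := by
  have hxα := rpow_pos_of_pos hx α
  have hyα := rpow_pos_of_pos hy α
  have hsq : ∀ z : ℝ, 0 < z → (z ^ α) ^ (2 / α) = z ^ 2 := fun z hz => by
    rw [← rpow_mul hz.le, mul_div_cancel₀ _ hα.ne', rpow_two]
  calc q * y ^ (-α) < p * x ^ (-α) ↔ q / p * x ^ α < y ^ α := by
        rw [rpow_neg hx.le, rpow_neg hy.le, div_mul_eq_mul_div, div_lt_iff₀ hp,
          ← div_eq_mul_inv, ← div_eq_mul_inv, div_lt_div_iff₀ hyα hxα, mul_comm p]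
    _ ↔ (q / p * x ^ α) ^ (2 / α) < (y ^ α) ^ (2 / α) :=
        (rpow_lt_rpow_iff (by positivity) hyα.le (by positivity)).symm
    _ ↔ (q / p) ^ (2 / α) * x ^ 2 < y ^ 2 := by
        rw [mul_rpow (by positivity) hxα.le, hsq x hx, hsq y hy]

variable {Ω : Type*} [MeasurableSpace Ω] {μ : Measure Ω}

theorem ProbabilityTheory.IndepFun.measure_preimage_prodMk {α β : Type*} [MeasurableSpace α]
    [MeasurableSpace β] [IsFiniteMeasure μ] {X : Ω → α} {Y : Ω → β} (hXY : IndepFun X Y μ)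
    (hX : Measurable X) (hY : Measurable Y) {A : Set (α × β)} (hA : MeasurableSet A) :
    μ ((fun ω => (X ω, Y ω)) ⁻¹' A) = ∫⁻ x, μ (Y ⁻¹' (Prod.mk x ⁻¹' A)) ∂μ.map X := by
  rw [← Measure.map_apply (hX.prodMk hY) hA,
    (indepFun_iff_map_prod_eq_prod_map_map hX.aemeasurable hY.aemeasurable).1 hXY,
    Measure.prod_apply hA]
  simp_rw [Measure.map_apply hY (measurable_prodMk_left hA)]

def HasExponentialTail (μ : Measure Ω) (X : Ω → ℝ) (a : ℝ) : Prop :=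
  ∀ r, 0 ≤ r → μ {ω | r < X ω} = ENNReal.ofReal (exp (-a * r))

lemma ae_lt_of_measure_setOf_lt_eq_one [IsProbabilityMeasure μ] {X : Ω → ℝ}
    (hXm : Measurable X) {c : ℝ} (h : μ {ω | c < X ω} = 1) : ∀ᵐ ω ∂μ, c < X ω :=
  (ae_iff_measure_eq (measurableSet_lt measurable_const hXm).nullMeasurableSet).2 <| by
    rw [h, measure_univ]

lemma HasExponentialTail.ae_pos [IsProbabilityMeasure μ] {X : Ω → ℝ} {a : ℝ}
    (hX : HasExponentialTail μ X a) (hXm : Measurable X) : ∀ᵐ ω ∂μ, 0 < X ω :=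
  ae_lt_of_measure_setOf_lt_eq_one hXm <| by simpa using hX 0 le_rfl

lemma hasExponentialTail_sq {X : Ω → ℝ} (hX : ∀ ω, 0 ≤ X ω) {a : ℝ}
    (h : ∀ r, 0 ≤ r → μ {ω | r < X ω} = ENNReal.ofReal (exp (-a * r ^ 2))) :
    HasExponentialTail μ (fun ω => X ω ^ 2) a := by
  intro r hr
  have hset : {ω | r < X ω ^ 2} = {ω | √r < X ω} := by
    ext ω
    exact (sqrt_lt hr (hX ω)).symm
  rw [hset, h _ (sqrt_nonneg r), sq_sqrt hr]

lemma lintegral_Ioi_ofReal_one_sub_rpow {c : ℝ} (hc : 0 ≤ c) :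
    ∫⁻ t in Ioi 0, ENNReal.ofReal (1 - t ^ c) = ENNReal.ofReal (c / (c + 1)) := by
  have hvanish : ∀ t ∈ Ioi (1 : ℝ), ENNReal.ofReal (1 - t ^ c) = 0 := fun t ht =>
    ENNReal.ofReal_eq_zero.2 (sub_nonpos.2 (one_le_rpow (le_of_lt ht) hc))
  have hint : IntervalIntegrable (fun t : ℝ => 1 - t ^ c) volume 0 1 :=
    intervalIntegrable_const.sub (intervalIntegral.intervalIntegrable_rpow' (by linarith))
  have hnonneg : 0 ≤ᵐ[volume.restrict (Ioc (0 : ℝ) 1)] fun t => 1 - t ^ c := by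
    filter_upwards [ae_restrict_mem measurableSet_Ioc] with t ht
    exact sub_nonneg.2 (rpow_le_one ht.1.le ht.2 hc)
  rw [← Ioc_union_Ioi_eq_Ioi zero_le_one,
    lintegral_union measurableSet_Ioi (Ioc_disjoint_Ioi le_rfl),
    setLIntegral_congr_fun measurableSet_Ioi hvanish, lintegral_zero, add_zero,
    ← ofReal_integral_eq_lintegral_ofReal
      ((intervalIntegrable_iff_integrableOn_Ioc_of_le zero_le_one).1 hint) hnonneg,
    ← intervalIntegral.integral_of_le zero_le_one, intervalIntegral.integral_sub
      intervalIntegrable_const (intervalIntegral.intervalIntegrable_rpow' (by linarith)),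
    integral_rpow (Or.inl (by linarith)), intervalIntegral.integral_const]
  congr 1
  field_simp
  simp [zero_rpow (by positivity : c + 1 ≠ 0)]

lemma HasExponentialTail.measure_le_exp_neg_mul [IsProbabilityMeasure μ] {X : Ω → ℝ} {a b : ℝ}
    (hX : HasExponentialTail μ X a) (hXm : Measurable X) (ha : 0 ≤ a) (hb : 0 < b) {t : ℝ}
    (ht : 0 < t) :
    μ {ω | t ≤ exp (-b * X ω)} = ENNReal.ofReal (1 - t ^ (a / b)) := by
  rcases le_or_gt t 1 with ht1 | ht1
  · set L := -log t / b
    have hL : 0 ≤ L := div_nonneg (neg_nonneg.2 (log_nonpos ht.le ht1)) hb.le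
    have hset : {ω | t ≤ exp (-b * X ω)} = {ω | L < X ω}ᶜ := by
      ext ω
      simp only [mem_ofPred_eq, mem_compl_iff, not_lt, ← log_le_iff_le_exp ht, L,
        le_div_iff₀ hb]
      constructor <;> intro h <;> linarith
    have hexp : exp (-a * L) = t ^ (a / b) := by
      rw [rpow_def_of_pos ht]
      congr 1
      simp only [L]
      field_simp
    rw [hset, prob_compl_eq_one_sub (measurableSet_lt measurable_const hXm), hX L hL, hexp,
      ENNReal.ofReal_sub _ (by positivity), ENNReal.ofReal_one]
  · have hneg : {ω | t ≤ exp (-b * X ω)} ⊆ {ω | ¬ 0 < X ω} := fun ω hω hpos => by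
      have : exp (-b * X ω) ≤ 1 := exp_le_one_iff.2 (by nlinarith)
      exact absurd (hω.trans this) (not_le.2 ht1)
    rw [measure_mono_null hneg (ae_iff.1 (hX.ae_pos hXm)), eq_comm, ENNReal.ofReal_eq_zero,
      sub_nonpos]
    exact one_le_rpow ht1.le (div_nonneg ha hb.le)

lemma HasExponentialTail.lintegral_exp_neg_mul [IsProbabilityMeasure μ] {X : Ω → ℝ} {a b : ℝ}
    (hX : HasExponentialTail μ X a) (hXm : Measurable X) (ha : 0 < a) (hb : 0 ≤ b) :
    ∫⁻ ω, ENNReal.ofReal (exp (-b * X ω)) ∂μ = ENNReal.ofReal (a / (a + b)) := by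
  rcases hb.eq_or_lt with rfl | hb
  · simp [ha.ne']
  rw [lintegral_eq_lintegral_meas_le μ (ae_of_all _ fun ω => (exp_pos _).le) (by fun_prop),
    setLIntegral_congr_fun measurableSet_Ioi fun t ht =>
      hX.measure_le_exp_neg_mul hXm ha.le hb ht,
    lintegral_Ioi_ofReal_one_sub_rpow (div_nonneg ha.le hb.le)]
  congr 1
  field_simp

theorem measure_forall_mul_lt_of_hasExponentialTail [IsProbabilityMeasure μ] {ι : Type*}
    [Fintype ι] [DecidableEq ι] {S : ι → Ω → ℝ} {a w : ι → ℝ} (hS : ∀ j, Measurable (S j))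
    (hindep : iIndepFun S μ) (htail : ∀ j, HasExponentialTail μ (S j) (a j))
    (ha : ∀ j, 0 < a j) (hw : ∀ j, 0 ≤ w j) (i : ι) :
    μ {ω | ∀ j ≠ i, w j * S i ω < S j ω} =
      ENNReal.ofReal (a i / (a i + ∑ j ∈ Finset.univ.erase i, a j * w j)) := by
  set T := Finset.univ.erase i
  set b := ∑ j ∈ T, a j * w j
  let Y : Ω → T → ℝ := fun ω j => S j ω
  have hY : Measurable Y := measurable_pi_lambda _ fun j => hS j
  have hindepY : IndepFun (S i) Y μ := by
    exact (hindep.indepFun_finset {i} T (by simp [T]) hS).comp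
      (measurable_pi_apply ⟨i, Finset.mem_singleton_self i⟩) measurable_id
  set A : Set (ℝ × (T → ℝ)) := {p | ∀ j : T, w j * p.1 < p.2 j}
  have hA : MeasurableSet A := by
    simp only [A, ofPred_forall]
    exact .iInter fun j =>
      measurableSet_lt (measurable_fst.const_mul _) ((measurable_pi_apply j).comp measurable_snd)
  have hevent : {ω | ∀ j ≠ i, w j * S i ω < S j ω} = (fun ω => (S i ω, Y ω)) ⁻¹' A := by
    ext ω
    simp [A, Y, T]
  have hslice : ∀ x, 0 ≤ x →
      μ (Y ⁻¹' (Prod.mk x ⁻¹' A)) = ENNReal.ofReal (exp (-b * x)) := by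
    intro x hx
    have hset : Y ⁻¹' (Prod.mk x ⁻¹' A) = ⋂ j ∈ T, S j ⁻¹' Ioi (w j * x) := by
      ext ω
      simp [A, Y]
    rw [hset, hindep.meas_biInter fun j _ => ⟨Ioi (w j * x), measurableSet_Ioi, rfl⟩,
      Finset.prod_congr (f := fun j => μ (S j ⁻¹' Ioi (w j * x))) rfl fun j _ =>
        htail j _ (mul_nonneg (hw j) hx),
      ← ENNReal.ofReal_prod_of_nonneg fun j _ => (exp_pos _).le, ← exp_sum]
    congr 2
    simp only [b, Finset.sum_mul, ← Finset.sum_neg_distrib]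
    exact Finset.sum_congr rfl fun j _ => by ring
  have hpos : ∀ᵐ x ∂μ.map (S i), 0 ≤ x :=
    (ae_map_iff (hS i).aemeasurable measurableSet_Ici).2 <|
      ((htail i).ae_pos (hS i)).mono fun ω h => h.le
  rw [hevent, hindepY.measure_preimage_prodMk (hS i) hY hA, lintegral_congr_ae
    (hpos.mono hslice), lintegral_map (by fun_prop) (hS i)]
  exact (htail i).lintegral_exp_neg_mul (hS i) (ha i)
    (Finset.sum_nonneg fun j _ => mul_nonneg (ha j).le (hw j))

end

theorem stmt11_general {Ω : Type*} [MeasurableSpace Ω] (μ : Measure Ω) [IsProbabilityMeasure μ]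
    (K : ℕ) (R : Fin K → Ω → ℝ) (lam P B : Fin K → ℝ) (α : ℝ)
    (hlam : ∀ j, 0 < lam j) (hP : ∀ j, 0 < P j) (hB : ∀ j, 0 < B j) (hα : 2 < α)
    (hmeas : ∀ j, Measurable (R j)) (hnn : ∀ j ω, 0 ≤ R j ω)
    (hindep : ProbabilityTheory.iIndepFun R μ)
    (hccdf : ∀ j, ∀ r : ℝ, 0 ≤ r →
      μ {ω | r < R j ω} = ENNReal.ofReal (Real.exp (-(lam j) * Real.pi * r ^ 2)))
    (i : Fin K) :
    μ {ω | ∀ j, j ≠ i → P j * B j * (R j ω) ^ (-α) < P i * B i * (R i ω) ^ (-α)}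
      = ENNReal.ofReal
          (1 / ∑ j, (lam j / lam i) * ((P j * B j) / (P i * B i)) ^ (2 / α)) := by
  have hQ : ∀ j, 0 < P j * B j := fun j => mul_pos (hP j) (hB j)
  set w : Fin K → ℝ := fun j => ((P j * B j) / (P i * B i)) ^ (2 / α)
  have hwi : w i = 1 := by simp [w, div_self (hQ i).ne']
  have hpos : ∀ᵐ ω ∂μ, ∀ j, 0 < R j ω := ae_all_iff.2 fun j =>
    ae_lt_of_measure_setOf_lt_eq_one (hmeas j) (by simpa using hccdf j 0 le_rfl)
  have hevent : {ω | ∀ j, j ≠ i → P j * B j * R j ω ^ (-α) < P i * B i * R i ω ^ (-α)}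
      =ᵐ[μ] {ω | ∀ j ≠ i, w j * R i ω ^ 2 < R j ω ^ 2} := by
    filter_upwards [hpos] with ω hω
    exact propext <| forall₂_congr fun j _ =>
      mul_rpow_neg_lt_mul_rpow_neg_iff (hQ i) (hQ j).le (hω i) (hω j) (by linarith)
  have htail : ∀ j, HasExponentialTail μ (fun ω => R j ω ^ 2) (lam j * Real.pi) := fun j =>
    hasExponentialTail_sq (hnn j) fun r hr => by rw [hccdf j r hr, neg_mul]
  rw [measure_congr hevent, measure_forall_mul_lt_of_hasExponentialTail
    (fun j => (hmeas j).pow_const 2) (hindep.comp (fun _ x => x ^ 2) fun _ => by fun_prop) htail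
    (fun j => mul_pos (hlam j) Real.pi_pos)
    (fun j => Real.rpow_nonneg (div_pos (hQ j) (hQ i)).le _) i]
  change _ = ENNReal.ofReal (1 / ∑ j, lam j / lam i * w j)
  have hsum : ∑ j ∈ Finset.univ.erase i, lam j * Real.pi * w j =
      lam i * Real.pi * ∑ j ∈ Finset.univ.erase i, lam j / lam i * w j := by
    rw [Finset.mul_sum]
    refine Finset.sum_congr rfl fun j _ => ?_
    field_simp [(hlam i).ne']
  rw [← Finset.add_sum_erase _ _ (Finset.mem_univ i), hwi, hsum, div_self (hlam i).ne',
    mul_one, ← mul_one_add (lam i * Real.pi),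
    div_mul_cancel_left₀ (mul_pos (hlam i) Real.pi_pos).ne', one_div]

theorem stmt11 {Ω : Type*} [MeasurableSpace Ω] (μ : Measure Ω) [IsProbabilityMeasure μ]
    (K : ℕ) (hK : 1 ≤ K) (R : Fin K → Ω → ℝ) (lam P B : Fin K → ℝ) (α : ℝ)
    (hlam : ∀ j, 0 < lam j) (hP : ∀ j, 0 < P j) (hB : ∀ j, 0 < B j) (hα : 2 < α)
    (hmeas : ∀ j, Measurable (R j)) (hnn : ∀ j ω, 0 ≤ R j ω)
    (hindep : ProbabilityTheory.iIndepFun R μ)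
    (hccdf : ∀ j, ∀ r : ℝ, 0 ≤ r →
      μ {ω | r < R j ω} = ENNReal.ofReal (Real.exp (-(lam j) * Real.pi * r ^ 2)))
    (i : Fin K) :
    μ {ω | ∀ j, j ≠ i → P j * B j * (R j ω) ^ (-α) < P i * B i * (R i ω) ^ (-α)}
      = ENNReal.ofReal
          (1 / ∑ j, (lam j / lam i) * ((P j * B j) / (P i * B i)) ^ (2 / α)) :=
  stmt11_general μ K R lam P B α hlam hP hB hα hmeas hnn hindep hccdf i
end

section
/- Let f : [0,∞) → [1,∞) be strictly increasing with f(0) = 1, let θ > 0, λ₂ > 0, c := λ₂·(P₂B₂)^δ > 0 with P₂ > 0, 0 < δ < 1, and B₂ > 0. Define M₁ := (1 + c) / (f(θ) + c·f(θ/B₂)) and M₂ := (1 + c⁻¹) / (f(θ) + c⁻¹·f(θ·B₂)). Then B₂ > 1 if and only if M₁ > M₂. -/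
open Set

theorem stmt13 (f : ℝ → ℝ) (hf : StrictMonoOn f (Ici 0)) (hf0 : f 0 = 1)
    (hf1 : ∀ x : ℝ, 0 ≤ x → 1 ≤ f x)
    (θ lam2 P₂ B₂ δ : ℝ) (hθ : 0 < θ) (hlam : 0 < lam2) (hP : 0 < P₂) (hB : 0 < B₂)
    (hδ : 0 < δ) (hδ1 : δ < 1) :
    1 < B₂ ↔
      (1 + lam2 * (P₂ * B₂) ^ δ) /
          (f θ + lam2 * (P₂ * B₂) ^ δ * f (θ / B₂)) >
        (1 + (lam2 * (P₂ * B₂) ^ δ)⁻¹) /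
          (f θ + (lam2 * (P₂ * B₂) ^ δ)⁻¹ * f (θ * B₂)) := by
  set c := lam2 * (P₂ * B₂) ^ δ with hcdef
  have hc : 0 < c := by positivity
  have hci : 0 < c⁻¹ := inv_pos.mpr hc
  have hcc : c * c⁻¹ = 1 := mul_inv_cancel₀ hc.ne'
  have hθd : (0:ℝ) ≤ θ / B₂ := by positivity
  have hθm : (0:ℝ) ≤ θ * B₂ := by positivity
  have hF : 1 ≤ f θ := hf1 θ hθ.le
  have hA : 1 ≤ f (θ / B₂) := hf1 _ hθd
  have hG : 1 ≤ f (θ * B₂) := hf1 _ hθm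
  have hD1 : 0 < f θ + c * f (θ / B₂) := by nlinarith
  have hD2 : 0 < f θ + c⁻¹ * f (θ * B₂) := by nlinarith
  constructor
  · intro hB1
    have h1 : θ / B₂ < θ := by
      rw [div_lt_iff₀ hB]; nlinarith
    have h2 : θ < θ * B₂ := by nlinarith
    have hA' : f (θ / B₂) < f θ := hf hθd hθ.le h1
    have hG' : f θ < f (θ * B₂) := hf hθ.le hθm h2
    rw [gt_iff_lt, div_lt_div_iff₀ hD2 hD1]
    nlinarith [mul_pos hc (sub_pos.mpr hA'), mul_pos hci (sub_pos.mpr hG')]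
  · intro h
    by_contra hB1
    push_neg at hB1
    have h1 : θ ≤ θ / B₂ := by
      rw [le_div_iff₀ hB]; nlinarith
    have h2 : θ * B₂ ≤ θ := by nlinarith
    have hA' : f θ ≤ f (θ / B₂) := hf.monotoneOn hθ.le hθd h1
    have hG' : f (θ * B₂) ≤ f θ := hf.monotoneOn hθm hθ.le h2
    rw [gt_iff_lt, div_lt_div_iff₀ hD2 hD1] at h
    nlinarith [mul_nonneg hc.le (sub_nonneg.mpr hA'), mul_nonneg hci.le (sub_nonneg.mpr hG')]
end

section
/- Fix 0 < δ < 1 and θ > 0, write f(x) := ₂F₁(1,-δ;1-δ;-x) = 1 + ∫₁^∞ (1 - 1/(1 + x·s^{-1/δ})) ds, and fix λ₂, P₂ > 0. Define M₁(B) := 1/(f(θ) + λ₂(P₂B)^δ f(θ/B)) + 1/(f(θ) + λ₂⁻¹(P₂B)^{-δ} f(θB)) for B > 0. Then M₁ is differentiable at B = 1 and M₁'(1) = 0. -/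
/-!
Write `M₁(B) = 1/(f θ + a B) + 1/(f θ + b B)` with `a B = λ₂ (P₂ B)^δ f(θ/B)` and
`b B = λ₂⁻¹ (P₂ B)^(-δ) f(θ B)`. For `y > 0`, `1/(c + y) + 1/(c + c²/y) = 1/c`, and to first order
this survives whenever `a b` is stationary at `c²`. Here `a(B) b(B) = f(θ/B) f(θB)` is invariant
under `B ↦ 1/B`, hence stationary at `B = 1`, where it equals `f(θ)²`.
-/

open MeasureTheory Set

/-- f(x) = ₂F₁(1, -δ; 1-δ; -x) via its integral representation. -/
noncomputable def hyp1 (δ x : ℝ) : ℝ :=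
  1 + ∫ s in Ioi (1 : ℝ), (1 - (1 + x * s ^ (-1 / δ))⁻¹)

section OneSubInvOneAddMul

variable {t y : ℝ}

lemma hasDerivAt_one_sub_inv_one_add_mul (h : 1 + y * t ≠ 0) :
    HasDerivAt (fun y => 1 - (1 + y * t)⁻¹) (t / (1 + y * t) ^ 2) y := by
  have hlin : HasDerivAt (fun y => 1 + y * t) t y := by
    simpa using ((hasDerivAt_id y).mul_const t).const_add 1
  refine ((hlin.inv h).const_sub 1).congr_deriv ?_
  ring

lemma abs_one_sub_inv_one_add_mul_le (ht : 0 ≤ t) (hy : 0 ≤ y) :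
    |1 - (1 + y * t)⁻¹| ≤ y * t := by
  have hyt : 0 ≤ y * t := mul_nonneg hy ht
  have hpos : 0 < 1 + y * t := by linarith
  have hfrac : 1 - (1 + y * t)⁻¹ = y * t / (1 + y * t) := by
    field_simp
    ring
  rw [hfrac, abs_of_nonneg (by positivity)]
  exact div_le_self hyt (by linarith)

lemma abs_div_one_add_mul_sq_le (ht : 0 ≤ t) (hy : 0 ≤ y) :
    |t / (1 + y * t) ^ 2| ≤ t := by
  have hone : 1 ≤ (1 + y * t) ^ 2 := one_le_pow₀ (by nlinarith)
  rw [abs_of_nonneg (by positivity)]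
  exact div_le_self ht hone

end OneSubInvOneAddMul

theorem hasDerivAt_integral_one_sub_inv_one_add_mul {α : Type*} [MeasurableSpace α]
    {μ : Measure α} {w : α → ℝ} (hw : Integrable w μ) (hw0 : ∀ᵐ s ∂μ, 0 ≤ w s)
    {x : ℝ} (hx : 0 < x) :
    HasDerivAt (fun y => ∫ s, (1 - (1 + y * w s)⁻¹) ∂μ)
      (∫ s, w s / (1 + x * w s) ^ 2 ∂μ) x := by
  have hmeas : ∀ g : ℝ → ℝ, Measurable g → AEStronglyMeasurable (fun s => g (w s)) μ :=
    fun g hg => (hg.comp_aemeasurable hw.aemeasurable).aestronglyMeasurable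
  have hball : ∀ y ∈ Metric.ball x (x / 2), 0 ≤ y := fun y hy => by
    rw [Real.ball_eq_Ioo] at hy
    linarith [hy.1]
  have hint : Integrable (fun s => 1 - (1 + x * w s)⁻¹) μ := by
    refine (hw.const_mul x).mono' (hmeas (fun u => 1 - (1 + x * u)⁻¹) (by fun_prop)) ?_
    filter_upwards [hw0] with s hs
    exact abs_one_sub_inv_one_add_mul_le hs hx.le
  refine (hasDerivAt_integral_of_dominated_loc_of_deriv_le
    (F' := fun y s => w s / (1 + y * w s) ^ 2) (Metric.ball_mem_nhds x (half_pos hx))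
    (.of_forall fun y => hmeas (fun u => 1 - (1 + y * u)⁻¹) (by fun_prop)) hint
    (hmeas (fun u => u / (1 + x * u) ^ 2) (by fun_prop)) ?_ hw ?_).2
  · filter_upwards [hw0] with s hs y hy
    exact abs_div_one_add_mul_sq_le hs (hball y hy)
  · filter_upwards [hw0] with s hs y hy
    exact hasDerivAt_one_sub_inv_one_add_mul (by nlinarith [hball y hy])

lemma integrableOn_Ioi_one_rpow_neg_inv {δ : ℝ} (hδ : 0 < δ) (hδ1 : δ < 1) :
    IntegrableOn (fun s : ℝ => s ^ (-1 / δ)) (Ioi 1) := by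
  refine integrableOn_Ioi_rpow_of_lt ?_ one_pos
  rw [div_lt_iff₀ hδ]
  linarith

lemma hasDerivAt_hyp1 {δ x : ℝ} (hδ : 0 < δ) (hδ1 : δ < 1) (hx : 0 < x) :
    HasDerivAt (hyp1 δ) (∫ s in Ioi (1 : ℝ), s ^ (-1 / δ) / (1 + x * s ^ (-1 / δ)) ^ 2) x := by
  have hw0 : ∀ᵐ s ∂(volume.restrict (Ioi (1 : ℝ))), 0 ≤ s ^ (-1 / δ) := by
    filter_upwards [ae_restrict_mem measurableSet_Ioi] with s hs
    exact Real.rpow_nonneg (zero_le_one.trans hs.le) _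
  exact (hasDerivAt_integral_one_sub_inv_one_add_mul
    (integrableOn_Ioi_one_rpow_neg_inv hδ hδ1) hw0 hx).const_add 1

lemma one_le_hyp1 {δ x : ℝ} (hx : 0 ≤ x) : 1 ≤ hyp1 δ x := by
  refine le_add_of_nonneg_right (setIntegral_nonneg measurableSet_Ioi fun s hs => ?_)
  have hpow : 0 ≤ s ^ (-1 / δ) := Real.rpow_nonneg (zero_le_one.trans hs.le) _
  exact sub_nonneg.2 (inv_le_one_of_one_le₀ (le_add_of_nonneg_right (mul_nonneg hx hpow)))

theorem HasDerivAt.one_div_add_one_div_of_mul {a b : ℝ → ℝ} {a' b' c x : ℝ}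
    (ha : HasDerivAt a a' x) (hb : HasDerivAt b b' x)
    (hab : HasDerivAt (fun y => a y * b y) 0 x) (habc : a x * b x = c ^ 2)
    (hca : c + a x ≠ 0) (hcb : c + b x ≠ 0) :
    HasDerivAt (fun y => 1 / (c + a y) + 1 / (c + b y)) 0 x := by
  have hprod : a' * b x + a x * b' = 0 := (ha.mul hb).unique hab
  refine (((hasDerivAt_const x 1).div (ha.const_add c) hca).add
    ((hasDerivAt_const x 1).div (hb.const_add c) hcb)).congr_deriv ?_
  field_simp
  linear_combination (-(a x + b x) - 2 * c) * hprod + (a' + b') * habc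

lemma hasDerivAt_comp_div_mul_comp_mul {g : ℝ → ℝ} {g' θ : ℝ} (hg : HasDerivAt g g' θ) :
    HasDerivAt (fun B => g (θ / B) * g (θ * B)) 0 1 := by
  have hdiv : HasDerivAt (fun B => θ / B) (-θ) 1 := by
    simpa [div_eq_mul_inv] using (hasDerivAt_inv one_ne_zero).const_mul θ
  have hmul : HasDerivAt (fun B => θ * B) θ 1 := by
    simpa using (hasDerivAt_id (1 : ℝ)).const_mul θ
  have h₁ : HasDerivAt (fun B => g (θ / B)) (g' * -θ) 1 :=
    (show HasDerivAt g g' (θ / 1) by rwa [div_one]).comp 1 hdiv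
  have h₂ : HasDerivAt (fun B => g (θ * B)) (g' * θ) 1 :=
    (show HasDerivAt g g' (θ * 1) by rwa [mul_one]).comp 1 hmul
  refine (h₁.mul h₂).congr_deriv ?_
  simp only [div_one, mul_one]
  ring

theorem stmt14 (δ θ lam2 P₂ : ℝ) (hδ : 0 < δ) (hδ1 : δ < 1) (hθ : 0 < θ)
    (hlam : 0 < lam2) (hP : 0 < P₂) :
    HasDerivAt (fun B : ℝ =>
        1 / (hyp1 δ θ + lam2 * (P₂ * B) ^ δ * hyp1 δ (θ / B)) +
          1 / (hyp1 δ θ + lam2⁻¹ * (P₂ * B) ^ (-δ) * hyp1 δ (θ * B)))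
      0 1 := by
  have hf := hasDerivAt_hyp1 hδ hδ1 hθ
  have hd₁ : DifferentiableAt ℝ (hyp1 δ) (θ / 1) := by rw [div_one]; exact hf.differentiableAt
  have hd₂ : DifferentiableAt ℝ (hyp1 δ) (θ * 1) := by rw [mul_one]; exact hf.differentiableAt
  have ha : DifferentiableAt ℝ (fun B : ℝ => lam2 * (P₂ * B) ^ δ * hyp1 δ (θ / B)) 1 := by
    fun_prop (disch := simp [hP.ne'])
  have hb : DifferentiableAt ℝ (fun B : ℝ => lam2⁻¹ * (P₂ * B) ^ (-δ) * hyp1 δ (θ * B)) 1 := by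
    fun_prop (disch := simp [hP.ne'])
  have hcancel : ∀ B : ℝ, 0 < B →
      lam2 * (P₂ * B) ^ δ * hyp1 δ (θ / B) * (lam2⁻¹ * (P₂ * B) ^ (-δ) * hyp1 δ (θ * B)) =
        hyp1 δ (θ / B) * hyp1 δ (θ * B) := fun B hB => by
    have hpow : 0 < (P₂ * B) ^ δ := by positivity
    rw [Real.rpow_neg (by positivity)]
    field_simp
  have hf₀ : 0 < hyp1 δ θ := zero_lt_one.trans_le (one_le_hyp1 hθ.le)
  refine HasDerivAt.one_div_add_one_div_of_mul ha.hasDerivAt hb.hasDerivAt ?_ ?_ ?_ ?_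
  · exact (hasDerivAt_comp_div_mul_comp_mul hf).congr_of_eventuallyEq
      ((eventually_gt_nhds one_pos).mono hcancel)
  · rw [hcancel 1 one_pos, div_one, mul_one, sq]
  · rw [div_one]
    positivity
  · simp only [mul_one]
    positivity
end

section
/- Let 0 < δ < 1, θ > 0, c > 0, d ≥ 1, and define, using H(z) := (1-δ)∫₀¹ t^{-δ}/(1+zt) dt: A₁(p) := 1 - (pθδ/(1-δ))H(θ(1-p)), A₂(p) := 1 - (pθδ/(1-δ))H(θd(1-p)), G₁(p) := 1 - (pθδ/(1-δ))H(θ(1-p)), G₂(p) := 1 - (pθδ/(1-δ))H(θ(1-p)/d). Set D₁(p₁,p₂) := A₁(p₁) + c·d^δ·G₂(p₂) and D₂(p₁,p₂) := (A₂(p₁) + c·d^δ·G₁(p₂))/(c·d^δ). Then for all p₁, p₂ ∈ [0,1], D₁(p₁,p₂) > 0 implies D₂(p₁,p₂) > 0. -/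
open MeasureTheory Set

/-- H(z) = ₂F₁(1, 1-δ; 2-δ; -z) via its Euler integral representation. -/
noncomputable def Hfun (δ z : ℝ) : ℝ :=
  (1 - δ) * ∫ t in Ioo (0 : ℝ) 1, t ^ (-δ) / (1 + z * t)

/-! The integrand of `H` decreases in `z`, so `H` is antitone on `[0, ∞)`. Since `d ≥ 1`, the
argument of `H` is larger in `A₂` than in `A₁` and smaller in `G₂` than in `G₁`, hence
`A₁ ≤ A₂` and `G₂ ≤ G₁`, and the numerator of `D₂` dominates `D₁` term by term. -/

lemma integrableOn_rpow_neg_div_one_add_mul {δ z : ℝ} (hδ1 : δ < 1) (hz : 0 ≤ z) :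
    IntegrableOn (fun t : ℝ => t ^ (-δ) / (1 + z * t)) (Ioo 0 1) := by
  have hrpow : IntegrableOn (fun t : ℝ => t ^ (-δ)) (Ioo 0 1) := by
    rw [intervalIntegral.integrableOn_Ioo_rpow_iff one_pos]
    linarith
  refine hrpow.integrable.mono' (by fun_prop : Measurable _).aestronglyMeasurable ?_
  filter_upwards [ae_restrict_mem measurableSet_Ioo] with t ht
  have h1 : 1 ≤ 1 + z * t := le_add_of_nonneg_right (mul_nonneg hz ht.1.le)
  have h0 : 0 ≤ t ^ (-δ) := Real.rpow_nonneg ht.1.le _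
  rw [Real.norm_of_nonneg (div_nonneg h0 (zero_le_one.trans h1))]
  exact div_le_self h0 h1

lemma Hfun_antitoneOn {δ : ℝ} (hδ1 : δ < 1) : AntitoneOn (Hfun δ) (Ici 0) := by
  intro z₁ hz₁ z₂ hz₂ hz
  refine mul_le_mul_of_nonneg_left ?_ (sub_nonneg.2 hδ1.le)
  refine setIntegral_mono_on (integrableOn_rpow_neg_div_one_add_mul hδ1 hz₂)
    (integrableOn_rpow_neg_div_one_add_mul hδ1 hz₁) measurableSet_Ioo fun t ht => ?_
  have ht₁ : 0 < 1 + z₁ * t := by nlinarith [ht.1, mem_Ici.1 hz₁]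
  exact div_le_div_of_nonneg_left (Real.rpow_nonneg ht.1.le _) ht₁
    (by nlinarith [ht.1])

lemma one_sub_mul_Hfun_le_of_le {δ a z₁ z₂ : ℝ} (hδ1 : δ < 1) (ha : 0 ≤ a) (hz₁ : 0 ≤ z₁)
    (hz : z₁ ≤ z₂) : 1 - a * Hfun δ z₁ ≤ 1 - a * Hfun δ z₂ :=
  sub_le_sub_left (mul_le_mul_of_nonneg_left
    (Hfun_antitoneOn hδ1 hz₁ (mem_Ici.2 (hz₁.trans hz)) hz) ha) 1

theorem stmt17 (δ θ c d : ℝ) (hδ : 0 < δ) (hδ1 : δ < 1) (hθ : 0 < θ)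
    (hc : 0 < c) (hd : 1 ≤ d) (p₁ p₂ : ℝ)
    (hp₁ : p₁ ∈ Icc (0 : ℝ) 1) (hp₂ : p₂ ∈ Icc (0 : ℝ) 1)
    (hD₁ : 0 < (1 - p₁ * θ * δ / (1 - δ) * Hfun δ (θ * (1 - p₁))) +
        c * d ^ δ * (1 - p₂ * θ * δ / (1 - δ) * Hfun δ (θ * (1 - p₂) / d))) :
    0 < ((1 - p₁ * θ * δ / (1 - δ) * Hfun δ (θ * d * (1 - p₁))) +
        c * d ^ δ * (1 - p₂ * θ * δ / (1 - δ) * Hfun δ (θ * (1 - p₂)))) /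
      (c * d ^ δ) := by
  have hcd : 0 < c * d ^ δ := mul_pos hc (Real.rpow_pos_of_pos (one_pos.trans_le hd) δ)
  have hcoef : ∀ p ∈ Icc (0 : ℝ) 1, 0 ≤ p * θ * δ / (1 - δ) := fun p hp =>
    div_nonneg (mul_nonneg (mul_nonneg hp.1 hθ.le) hδ.le) (sub_nonneg.2 hδ1.le)
  have hz : ∀ p ∈ Icc (0 : ℝ) 1, 0 ≤ θ * (1 - p) := fun p hp =>
    mul_nonneg hθ.le (sub_nonneg.2 hp.2)
  have hA : 1 - p₁ * θ * δ / (1 - δ) * Hfun δ (θ * (1 - p₁)) ≤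
      1 - p₁ * θ * δ / (1 - δ) * Hfun δ (θ * d * (1 - p₁)) :=
    one_sub_mul_Hfun_le_of_le hδ1 (hcoef p₁ hp₁) (hz p₁ hp₁) (by
      rw [mul_right_comm]; exact le_mul_of_one_le_right (hz p₁ hp₁) hd)
  have hG : 1 - p₂ * θ * δ / (1 - δ) * Hfun δ (θ * (1 - p₂) / d) ≤
      1 - p₂ * θ * δ / (1 - δ) * Hfun δ (θ * (1 - p₂)) :=
    one_sub_mul_Hfun_le_of_le hδ1 (hcoef p₂ hp₂) (div_nonneg (hz p₂ hp₂) (by linarith))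
      (div_le_self (hz p₂ hp₂) hd)
  refine div_pos (hD₁.trans_le ?_) hcd
  gcongr
end

section
/- For α > 2, δ := 2/α, θ > 0, 0 ≤ p ≤ 1, and a natural number b ≥ 1, the following identity holds: ∫₀¹ (1 - (1 - pθr^α/(1+θr^α))^b)·r^{-3} dr = Σ_{k=1}^{b} C(b,k)·(-(-pθ)^k/(kα - 2))·₂F₁(k, k-δ; k-δ+1; -θ), where ₂F₁(k, k-δ; k-δ+1; -θ) := (k-δ)·∫₀¹ t^{k-δ-1}/(1+θt)^k dt. -/
/-!
Expanding `1 - (1 - x) ^ b` binomially, with `x = pθr^α / (1 + θr^α)`, splits the integrand into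
the terms `C(b,k) · (-(-pθ)^k) · r^(kα-3) / (1 + θr^α)^k`, each integrable on `(0, 1)` since
`kα - 3 > -1`. The substitution `t = r^α` turns the `k`-th integral into
`α⁻¹ ∫₀¹ t^(k-δ-1) / (1 + θt)^k dt`, and `α⁻¹ = (k - δ) / (kα - 2)`.
-/

open MeasureTheory Set Real

theorem one_sub_one_sub_pow {R : Type*} [CommRing R] (x : R) (n : ℕ) :
    1 - (1 - x) ^ n = ∑ k ∈ Finset.Icc 1 n, (n.choose k : R) * -(-x) ^ k := by
  rw [sub_eq_neg_add 1 x, add_pow, Finset.range_eq_Ico,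
    Finset.sum_eq_sum_Ico_succ_bot (by omega : 0 < n + 1), zero_add,
    Finset.Ico_add_one_right_eq_Icc]
  simp only [one_pow, mul_one, pow_zero, Nat.choose_zero_right, Nat.cast_one,
    sub_add_cancel_left, ← Finset.sum_neg_distrib]
  exact Finset.sum_congr rfl fun k _ => by ring

theorem one_sub_one_sub_div_pow_mul_rpow {r : ℝ} (hr : 0 < r) (α θ c : ℝ) (n : ℕ) :
    (1 - (1 - c * r ^ α / (1 + θ * r ^ α)) ^ n) * r ^ (-(3 : ℝ))
      = ∑ k ∈ Finset.Icc 1 n, (n.choose k : ℝ) * -(-c) ^ k *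
          (r ^ ((k : ℝ) * α - 3) / (1 + θ * r ^ α) ^ k) := by
  rw [one_sub_one_sub_pow, Finset.sum_mul]
  refine Finset.sum_congr rfl fun k _ => ?_
  have hpow : (r ^ α) ^ k * r ^ (-(3 : ℝ)) = r ^ ((k : ℝ) * α - 3) := by
    rw [← rpow_mul_natCast hr.le, ← rpow_add hr]
    ring_nf
  rw [← hpow, neg_div', ← neg_mul, div_pow, mul_pow]
  ring

theorem integrableOn_rpow_div_one_add_mul_rpow_pow {s θ : ℝ} (hs : -1 < s) (hθ : 0 ≤ θ)
    (α : ℝ) (n : ℕ) :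
    IntegrableOn (fun r : ℝ => r ^ s / (1 + θ * r ^ α) ^ n) (Ioo 0 1) := by
  have hrpow : IntegrableOn (fun r : ℝ => r ^ s) (Ioo 0 1) :=
    (intervalIntegrable_iff_integrableOn_Ioo_of_le zero_le_one).1
      (intervalIntegral.intervalIntegrable_rpow' hs)
  refine hrpow.mono' ?_ ?_
  · refine ContinuousOn.aestronglyMeasurable (fun r hr => ?_) measurableSet_Ioo
    have hr0 := hr.1
    refine ContinuousAt.continuousWithinAt (ContinuousAt.div ?_ ?_ (by positivity)) <;>
      fun_prop (disch := exact Or.inl hr0.ne')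
  · filter_upwards [ae_restrict_mem measurableSet_Ioo] with r hr
    have hr0 := hr.1
    have hden : 1 ≤ (1 + θ * r ^ α) ^ n := one_le_pow₀ (by simp; positivity)
    rw [norm_div, norm_of_nonneg (by positivity), norm_of_nonneg (by positivity)]
    exact div_le_self (by positivity) hden

theorem rpow_image_Ioo_zero_one {p : ℝ} (hp : 0 < p) :
    (· ^ p) '' Ioo (0 : ℝ) 1 = Ioo 0 1 := by
  refine Subset.antisymm ?_ fun t ht => ?_
  · rintro _ ⟨r, hr, rfl⟩
    exact ⟨rpow_pos_of_pos hr.1 p, rpow_lt_one hr.1.le hr.2 hp⟩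
  · exact ⟨t ^ p⁻¹, ⟨rpow_pos_of_pos ht.1 _, rpow_lt_one ht.1.le ht.2 (inv_pos.2 hp)⟩,
      rpow_inv_rpow ht.1.le hp.ne'⟩

theorem integral_comp_rpow_Ioo_zero_one {E : Type*} [NormedAddCommGroup E] [NormedSpace ℝ E]
    (g : ℝ → E) {p : ℝ} (hp : 0 < p) :
    ∫ x in Ioo (0 : ℝ) 1, (p * x ^ (p - 1)) • g (x ^ p) = ∫ y in Ioo (0 : ℝ) 1, g y := by
  have hsubst := integral_image_eq_integral_abs_deriv_smul (measurableSet_Ioo (a := 0) (b := 1))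
    (fun x hx => (hasDerivAt_rpow_const (Or.inl hx.1.ne')).hasDerivWithinAt)
    ((rpow_left_injOn hp.ne').mono fun x hx => hx.1.le) g
  rw [rpow_image_Ioo_zero_one hp] at hsubst
  rw [hsubst]
  refine setIntegral_congr_fun measurableSet_Ioo fun x hx => ?_
  rw [abs_of_pos (by have := hx.1; positivity)]

theorem mul_integral_rpow_div_one_add_mul_rpow_pow {α : ℝ} (hα : 0 < α) (θ a : ℝ) (n : ℕ) :
    α * ∫ r in Ioo (0 : ℝ) 1, r ^ (a * α - 3) / (1 + θ * r ^ α) ^ n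
      = ∫ t in Ioo (0 : ℝ) 1, t ^ (a - 2 / α - 1) / (1 + θ * t) ^ n := by
  rw [← integral_comp_rpow_Ioo_zero_one (fun t => t ^ (a - 2 / α - 1) / (1 + θ * t) ^ n) hα,
    ← integral_const_mul]
  refine setIntegral_congr_fun measurableSet_Ioo fun r hr => ?_
  have hexp : α - 1 + α * (a - 2 / α - 1) = a * α - 3 := by field_simp; ring
  rw [smul_eq_mul, ← rpow_mul hr.1.le, ← hexp, rpow_add hr.1]
  ring

theorem stmt18_general (α δ θ p : ℝ) (b : ℕ) (hα : 2 < α) (hδ : δ = 2 / α) (hθ : 0 < θ) :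
    (∫ r in Ioo (0 : ℝ) 1, (1 - (1 - p * θ * r ^ α / (1 + θ * r ^ α)) ^ b) * r ^ (-(3 : ℝ)))
      = ∑ k ∈ Finset.Icc 1 b, (b.choose k : ℝ) * (-(-(p * θ)) ^ k / (k * α - 2)) *
          (((k : ℝ) - δ) * ∫ t in Ioo (0 : ℝ) 1, t ^ ((k : ℝ) - δ - 1) / (1 + θ * t) ^ k) := by
  have hα0 : 0 < α := by linarith
  have hkα : ∀ k ∈ Finset.Icc 1 b, 2 < (k : ℝ) * α := fun k hk => by
    have : (1 : ℝ) ≤ k := by exact_mod_cast (Finset.mem_Icc.1 hk).1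
    nlinarith
  rw [setIntegral_congr_fun measurableSet_Ioo fun r hr =>
      one_sub_one_sub_div_pow_mul_rpow hr.1 α θ (p * θ) b,
    integral_finsetSum _ fun k hk => (integrableOn_rpow_div_one_add_mul_rpow_pow
      (by linarith [hkα k hk]) hθ.le α k).const_mul _]
  refine Finset.sum_congr rfl fun k hk => ?_
  have hk : (k : ℝ) * α - 2 ≠ 0 := by linarith [hkα k hk]
  rw [integral_const_mul, hδ, ← mul_integral_rpow_div_one_add_mul_rpow_pow hα0]
  field_simp

theorem stmt18 (α δ θ p : ℝ) (b : ℕ) (hα : 2 < α) (hδ : δ = 2 / α) (hθ : 0 < θ)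
    (hp0 : 0 ≤ p) (hp1 : p ≤ 1) (hb : 1 ≤ b) :
    (∫ r in Ioo (0 : ℝ) 1, (1 - (1 - p * θ * r ^ α / (1 + θ * r ^ α)) ^ b) * r ^ (-(3 : ℝ)))
      = ∑ k ∈ Finset.Icc 1 b, (b.choose k : ℝ) * (-(-(p * θ)) ^ k / (k * α - 2)) *
          (((k : ℝ) - δ) * ∫ t in Ioo (0 : ℝ) 1, t ^ ((k : ℝ) - δ - 1) / (1 + θ * t) ^ k) :=
  stmt18_general α δ θ p b hα hδ hθ
end
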